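/- arXiv:1509.09181 — 5 statements merged into one kernel-verified Lean document; each statement's English description precedes it below -/
import Mathlib

section
/- Let θ₊, θ₋ : ℕ → ℤ be sequences and define K₊, K₋ : ℕ → ℤ by K₊(N) = Σ_{g ∣ N, g odd} (N/g)·θ₊(N/g) and K₋(N) = Σ_{g ∣ N, g even} (N/g)·θ₊(N/g) + Σ_{g ∣ N} (N/g)·θ₋(N/g) for all N ≥ 1. Then for every N ≥ 1 one has N·θ₋(N) = Σ_{g ∣ N, g even} μ(g)·K₊(N/g) + Σ_{g ∣ N} μ(g)·K₋(N/g), where μ is the Möbius function. (Theorem 2.2, formula (2.8).) -/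
/-!
Write `F n = n * θp n` and `M n = n * θm n` as arithmetic functions and let `f_odd`, `f_even` be
the restrictions of `f` to odd and even arguments. The hypotheses say `Kp = ζ_odd * F` and
`Km = ζ_even * F + ζ * M`. Oddness is multiplicative (`Odd (m * n) ↔ Odd m ∧ Odd n`), so
restriction to odd arguments commutes with Dirichlet convolution and `μ_odd * ζ_odd = 1`.
Together with `μ * ζ = 1`, `μ = μ_odd + μ_even` and `ζ = ζ_odd + ζ_even`, the claimed
formula `M = μ_even * Kp + μ * Km` becomes a ring identity.
-/

open Finset ArithmeticFunction

open scoped ArithmeticFunction.zeta ArithmeticFunction.Moebius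

namespace ArithmeticFunction

variable {R : Type*}

def restrict [Zero R] (p : ℕ → Prop) [DecidablePred p] (f : ArithmeticFunction R) :
    ArithmeticFunction R :=
  ⟨fun n => if p n then f n else 0, by simp⟩

@[simp]
theorem restrict_apply [Zero R] (p : ℕ → Prop) [DecidablePred p] (f : ArithmeticFunction R)
    (n : ℕ) : restrict p f n = if p n then f n else 0 :=
  rfl

theorem restrict_odd_add_restrict_even [AddMonoid R] (f : ArithmeticFunction R) :
    restrict Odd f + restrict Even f = f := by
  ext n
  rcases Nat.even_or_odd n with h | h
  · simp [h, Nat.not_odd_iff_even.mpr h]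
  · simp [h, Nat.not_even_iff_odd.mpr h]

theorem restrict_mul_restrict [Semiring R] {p : ℕ → Prop} [DecidablePred p]
    (hp : ∀ m n, p (m * n) ↔ p m ∧ p n) (f g : ArithmeticFunction R) :
    restrict p f * restrict p g = restrict p (f * g) := by
  ext n
  simp only [mul_apply, restrict_apply]
  split_ifs with hn
  · refine sum_congr rfl fun x hx => ?_
    rw [← (Nat.mem_divisorsAntidiagonal.mp hx).1, hp] at hn
    simp [hn.1, hn.2]
  · refine sum_eq_zero fun x hx => ?_
    rw [← (Nat.mem_divisorsAntidiagonal.mp hx).1, hp, not_and_or] at hn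
    rcases hn with h | h <;> simp [h]

theorem restrict_one [Semiring R] {p : ℕ → Prop} [DecidablePred p] (hp : p 1) :
    restrict p (1 : ArithmeticFunction R) = 1 := by
  ext n
  by_cases hn : n = 1 <;> simp [hn, hp]

theorem restrict_moebius_mul_restrict_zeta [Ring R] {p : ℕ → Prop} [DecidablePred p]
    (hp : ∀ m n, p (m * n) ↔ p m ∧ p n) (hp₁ : p 1) :
    restrict p (μ : ArithmeticFunction R) * restrict p (ζ : ArithmeticFunction R) = 1 := by
  rw [restrict_mul_restrict hp, coe_moebius_mul_coe_zeta, restrict_one hp₁]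

theorem eq_restrict_even_moebius_mul_add_moebius_mul [CommRing R]
    {F M Kp Km : ArithmeticFunction R}
    (hKp : Kp = restrict Odd (ζ : ArithmeticFunction R) * F)
    (hKm : Km = restrict Even (ζ : ArithmeticFunction R) * F + ζ * M) :
    M = restrict Even (μ : ArithmeticFunction R) * Kp + μ * Km := by
  have hμ := restrict_odd_add_restrict_even (μ : ArithmeticFunction R)
  have hζ := restrict_odd_add_restrict_even (ζ : ArithmeticFunction R)
  rw [hKp, hKm]
  have hodd := restrict_moebius_mul_restrict_zeta (R := R) (fun _ _ => Nat.odd_mul) odd_one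
  linear_combination F * hodd
    - (F + M) * coe_moebius_mul_coe_zeta (R := R)
    - (restrict Odd (ζ : ArithmeticFunction R) * F) * hμ - (μ * F) * hζ

theorem mul_toArithmeticFunction_apply [Semiring R] (f : ArithmeticFunction R) (g : ℕ → R)
    (n : ℕ) : (f * toArithmeticFunction g) n = ∑ d ∈ n.divisors, f d * g (n / d) := by
  rw [mul_apply, Nat.sum_divisorsAntidiagonal fun a b => f a * toArithmeticFunction g b]
  refine sum_congr rfl fun d hd => ?_
  have : n / d ≠ 0 := (Nat.div_pos (Nat.divisor_le hd) (Nat.pos_of_mem_divisors hd)).ne'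
  simp [toArithmeticFunction, this]

theorem restrict_mul_toArithmeticFunction_apply [Semiring R] (p : ℕ → Prop) [DecidablePred p]
    (f : ArithmeticFunction R) (g : ℕ → R) (n : ℕ) :
    (restrict p f * toArithmeticFunction g) n = ∑ d ∈ n.divisors.filter p, f d * g (n / d) := by
  simp only [mul_toArithmeticFunction_apply, sum_filter, restrict_apply, ite_mul, zero_mul]

theorem restrict_zeta_mul_toArithmeticFunction_apply [Semiring R] (p : ℕ → Prop)
    [DecidablePred p] (g : ℕ → R) (n : ℕ) :
    (restrict p (ζ : ArithmeticFunction R) * toArithmeticFunction g) n =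
      ∑ d ∈ n.divisors.filter p, g (n / d) := by
  rw [restrict_mul_toArithmeticFunction_apply]
  refine sum_congr rfl fun d hd => ?_
  simp [(Nat.pos_of_mem_divisors (mem_filter.mp hd).1).ne']

theorem zeta_mul_toArithmeticFunction_apply [Semiring R] (g : ℕ → R) (n : ℕ) :
    ((ζ : ArithmeticFunction R) * toArithmeticFunction g) n = ∑ d ∈ n.divisors, g (n / d) := by
  rw [mul_toArithmeticFunction_apply]
  refine sum_congr rfl fun d hd => ?_
  simp [(Nat.pos_of_mem_divisors hd).ne']

end ArithmeticFunction

theorem toArithmeticFunction_eq {R : Type*} [Zero R] {g : ℕ → R} {f : ArithmeticFunction R}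
    (h : ∀ n, n ≠ 0 → g n = f n) : toArithmeticFunction g = f := by
  rw [← f.toArithmeticFunction_eq_self]
  exact toArithmeticFunction_congr (h _)

/-- Theorem 2.2, formula (2.8): inversion formula for the number of
equivalence classes of nonperiodic cycles of negative sign. -/
theorem feynman_theta_minus_inversion (θp θm Kp Km : ℕ → ℤ)
    (hKp : ∀ N : ℕ, 1 ≤ N →
      Kp N = ∑ g ∈ N.divisors.filter (fun g => Odd g), ((N / g : ℕ) : ℤ) * θp (N / g))
    (hKm : ∀ N : ℕ, 1 ≤ N →
      Km N = ∑ g ∈ N.divisors.filter (fun g => Even g), ((N / g : ℕ) : ℤ) * θp (N / g)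
        + ∑ g ∈ N.divisors, ((N / g : ℕ) : ℤ) * θm (N / g)) :
    ∀ N : ℕ, 1 ≤ N →
      (N : ℤ) * θm N =
        ∑ g ∈ N.divisors.filter (fun g => Even g), (moebius g : ℤ) * Kp (N / g)
        + ∑ g ∈ N.divisors, (moebius g : ℤ) * Km (N / g) := by
  intro N hN
  set F := toArithmeticFunction fun n => (n : ℤ) * θp n
  set M := toArithmeticFunction fun n => (n : ℤ) * θm n
  have hKp' : toArithmeticFunction Kp = restrict Odd (ζ : ArithmeticFunction ℤ) * F :=
    toArithmeticFunction_eq fun n hn => by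
      rw [hKp n (Nat.one_le_iff_ne_zero.mpr hn), restrict_zeta_mul_toArithmeticFunction_apply]
  have hKm' : toArithmeticFunction Km = restrict Even (ζ : ArithmeticFunction ℤ) * F + ζ * M :=
    toArithmeticFunction_eq fun n hn => by
      rw [hKm n (Nat.one_le_iff_ne_zero.mpr hn), ArithmeticFunction.add_apply,
        restrict_zeta_mul_toArithmeticFunction_apply, zeta_mul_toArithmeticFunction_apply]
  have h := congr_arg (· N) (eq_restrict_even_moebius_mul_add_moebius_mul hKp' hKm')
  rw [ArithmeticFunction.add_apply, restrict_mul_toArithmeticFunction_apply,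
    mul_toArithmeticFunction_apply] at h
  simp only [intCoe_apply, Int.cast_id] at h
  rw [← h]
  exact (if_neg (Nat.one_le_iff_ne_zero.mp hN)).symm
end

section
/- Let θ₊, θ₋ : ℕ → ℤ be sequences and define K₊, K₋ : ℕ → ℤ by K₊(N) = Σ_{g ∣ N, g odd} (N/g)·θ₊(N/g) and K₋(N) = Σ_{g ∣ N, g even} (N/g)·θ₊(N/g) + Σ_{g ∣ N} (N/g)·θ₋(N/g) for all N ≥ 1. Then for every N ≥ 1: if N is odd, Σ_{g ∣ N} μ(g)·(K₋(N/g) − K₊(N/g)) = N·(θ₋(N) − θ₊(N)); and if N is even, Σ_{g ∣ N} μ(g)·(K₋(N/g) − K₊(N/g)) = N·(θ₋(N) − θ₊(N) + θ₊(N/2)), where μ is the Möbius function. (Theorem 3.2: the exponent Ω(N) := (1/N)Σ_{g ∣ N} μ(g)(K₋ − K₊)(N/g) equals θ₋(N) − θ₊(N) for odd N and θ₋(N) − θ₊(N) + θ₊(N/2) for even N; in particular it is an integer.) -/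
/-!
Writing `a(d) = d θ₊(d)` and `b(d) = d θ₋(d)`, the substitution `d = N/g` turns the defining sums
into divisor sums: `K₋(N) − K₊(N) = Σ_{d ∣ N} (b(d) − a(d)) + 2 Σ_{e ∣ N/2} a(e)`, the last sum
only for even `N`, since the even divisors of `2m` are exactly the doubles of the divisors of `m`.
As `2 a(e) = (2e) θ₊(e)`, this says `K₋ − K₊ = Σ_{d ∣ N} d Ω(d)`, and Möbius inversion gives
`Σ_{g ∣ N} μ(g) (K₋ − K₊)(N/g) = N Ω(N)`.
-/

open Finset ArithmeticFunction

namespace Nat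

theorem filter_even_divisors_two_mul (m : ℕ) :
    {d ∈ (2 * m).divisors | Even d} =
      m.divisors.map ⟨(2 * ·), mul_right_injective₀ two_ne_zero⟩ := by
  ext d
  simp only [mem_filter, mem_divisors, mem_map, Function.Embedding.coeFn_mk]
  constructor
  · rintro ⟨⟨hdvd, hm⟩, e, rfl⟩
    refine ⟨e, ⟨?_, by omega⟩, two_mul e⟩
    exact (mul_dvd_mul_iff_left two_ne_zero).1 (two_mul e ▸ hdvd)
  · rintro ⟨e, ⟨hdvd, hm⟩, rfl⟩
    exact ⟨⟨mul_dvd_mul_left 2 hdvd, by omega⟩, even_two_mul e⟩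

theorem filter_even_divisors_of_odd {n : ℕ} (hn : Odd n) : {d ∈ n.divisors | Even d} = ∅ :=
  filter_eq_empty_iff.2 fun _ hd heven =>
    Nat.not_even_iff_odd.2 hn (even_iff_two_dvd.2 (heven.two_dvd.trans (dvd_of_mem_divisors hd)))

theorem sum_even_divisors_div_eq_sum_even_divisors_half {M : Type*} [AddCommMonoid M]
    (n : ℕ) (f : ℕ → M) :
    ∑ g ∈ n.divisors with Even g, f (n / g) = ∑ d ∈ n.divisors with Even d, f (d / 2) := by
  rcases n.even_or_odd' with ⟨m, rfl | rfl⟩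
  · simp only [filter_even_divisors_two_mul, sum_map, Function.Embedding.coeFn_mk,
      Nat.mul_div_mul_left _ _ two_pos, Nat.mul_div_cancel_left _ two_pos]
    exact sum_div_divisors m f
  · simp [filter_even_divisors_of_odd (odd_two_mul_add_one m)]

end Nat

theorem sum_divisors_moebius_mul_eq_of_sum_divisors_eq {R : Type*} [NonAssocRing R]
    {f g : ℕ → R} (h : ∀ n > 0, ∑ d ∈ n.divisors, f d = g n) {n : ℕ} (hn : 0 < n) :
    ∑ d ∈ n.divisors, (moebius d : R) * g (n / d) = f n := by
  rw [← sum_eq_iff_sum_mul_moebius_eq.1 h n hn,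
    Nat.sum_divisorsAntidiagonal (fun d e => (moebius d : R) * g e)]

/-- The paper's exponent `Ω(N)`. -/
def feynmanExponent (θp θm : ℕ → ℤ) (N : ℕ) : ℤ :=
  θm N - θp N + if Even N then θp (N / 2) else 0

theorem sum_divisors_mul_feynmanExponent (θp θm : ℕ → ℤ) (n : ℕ) :
    ∑ d ∈ n.divisors, (d : ℤ) * feynmanExponent θp θm d =
      ∑ g ∈ n.divisors with Even g, ((n / g : ℕ) : ℤ) * θp (n / g)
        + ∑ g ∈ n.divisors, ((n / g : ℕ) : ℤ) * θm (n / g)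
        - ∑ g ∈ n.divisors with Odd g, ((n / g : ℕ) : ℤ) * θp (n / g) := by
  have hodd : ∑ g ∈ n.divisors with Odd g, ((n / g : ℕ) : ℤ) * θp (n / g) =
      ∑ d ∈ n.divisors, (d : ℤ) * θp d
        - ∑ g ∈ n.divisors with Even g, ((n / g : ℕ) : ℤ) * θp (n / g) := by
    rw [eq_sub_iff_add_eq, ← Nat.sum_div_divisors n (fun d => (d : ℤ) * θp d)]
    simpa only [Nat.not_even_iff_odd] using
      sum_filter_not_add_sum_filter n.divisors Even fun g => ((n / g : ℕ) : ℤ) * θp (n / g)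
  have heven : 2 * ∑ g ∈ n.divisors with Even g, ((n / g : ℕ) : ℤ) * θp (n / g) =
      ∑ d ∈ n.divisors with Even d, (d : ℤ) * θp (d / 2) := by
    rw [Nat.sum_even_divisors_div_eq_sum_even_divisors_half n (fun k => (k : ℤ) * θp k), mul_sum]
    refine sum_congr rfl fun d hd => ?_
    rw [← mul_assoc, ← Nat.cast_two, ← Nat.cast_mul,
      Nat.two_mul_div_two_of_even (mem_filter.1 hd).2]
  simp only [feynmanExponent, mul_add, mul_ite, mul_zero, sum_add_distrib, ← sum_filter]
  rw [Nat.sum_div_divisors n (fun d => (d : ℤ) * θm d), hodd, ← heven]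
  simp only [mul_sub, sum_sub_distrib]
  ring

/-- Theorem 3.2: the exponent `Ω(N) = (1/N) Σ_{g∣N} μ(g)(K₋−K₊)(N/g)`
equals `θ₋(N) − θ₊(N)` for odd `N` and `θ₋(N) − θ₊(N) + θ₊(N/2)` for even `N`. -/
theorem feynman_Omega_eq (θp θm Kp Km : ℕ → ℤ)
    (hKp : ∀ N : ℕ, 1 ≤ N →
      Kp N = ∑ g ∈ N.divisors.filter (fun g => Odd g), ((N / g : ℕ) : ℤ) * θp (N / g))
    (hKm : ∀ N : ℕ, 1 ≤ N →
      Km N = ∑ g ∈ N.divisors.filter (fun g => Even g), ((N / g : ℕ) : ℤ) * θp (N / g)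
        + ∑ g ∈ N.divisors, ((N / g : ℕ) : ℤ) * θm (N / g)) :
    ∀ N : ℕ, 1 ≤ N →
      (Odd N →
        ∑ g ∈ N.divisors, (moebius g : ℤ) * (Km (N / g) - Kp (N / g))
          = (N : ℤ) * (θm N - θp N))
      ∧ (Even N →
        ∑ g ∈ N.divisors, (moebius g : ℤ) * (Km (N / g) - Kp (N / g))
          = (N : ℤ) * (θm N - θp N + θp (N / 2))) := by
  intro N hN
  have hΩ := sum_divisors_moebius_mul_eq_of_sum_divisors_eq
    (f := fun d => d * feynmanExponent θp θm d) (g := fun n => Km n - Kp n)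
    (fun n hn => by rw [hKm n hn, hKp n hn, sum_divisors_mul_feynmanExponent]) hN
  simp only [Int.cast_id] at hΩ
  refine ⟨fun hodd => ?_, fun heven => ?_⟩
  · rw [hΩ, feynmanExponent, if_neg (Nat.not_even_iff_odd.2 hodd), add_zero]
  · rw [hΩ, feynmanExponent, if_pos heven]
end

section
/- Let θ₊, θ₋ : ℕ → ℤ be sequences and define K₊, K₋ : ℕ → ℤ by K₊(N) = Σ_{g ∣ N, g odd} (N/g)·θ₊(N/g) and K₋(N) = Σ_{g ∣ N, g even} (N/g)·θ₊(N/g) + Σ_{g ∣ N} (N/g)·θ₋(N/g) for all N ≥ 1. Then in the formal power series ring ℚ⟦X⟧ the identity ∏_{N≥1} (1+X^N)^{θ₊(N)} · (1−X^N)^{θ₋(N)} = exp( Σ_{N≥1} (K₊(N) − K₋(N))/N · X^N ) holds coefficientwise; that is, for every n ≥ 0 the coefficient of X^n in the finite product ∏_{N=1}^{n} (1+X^N)^{θ₊(N)} (1−X^N)^{θ₋(N)} equals the coefficient of X^n in exp( Σ_{N≥1} (K₊(N) − K₋(N))/N · X^N ). (The main computation in the proof of Theorem 3.1: the Feynman-identity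 product equals e^{−g(z)} with g(z) = Σ_N Tr S^N/N z^N = Σ_N (K₋(N)−K₊(N))/N z^N.) -/
open Finset PowerSeries

/-- Integer power of a formal power series: for a unit `f`, `fzpow f k` is `f^k` for
`k ≥ 0` and the inverse of `f^{-k}` for `k < 0` (via `Ring.inverse`). -/
noncomputable def fzpow (f : PowerSeries ℚ) (k : ℤ) : PowerSeries ℚ :=
  if 0 ≤ k then f ^ k.toNat else Ring.inverse (f ^ (-k).toNat)

/-- The formal exponential `exp(f) = Σ_{k≥0} f^k/k!` of a power series `f` with zero
constant term: its `n`-th coefficient is `Σ_{k=0}^{n} coeff n (f^k)/k!` (terms with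
`k > n` vanish since `f^k` has order `> n`). -/
noncomputable def formalExp (f : PowerSeries ℚ) : PowerSeries ℚ :=
  PowerSeries.mk fun n =>
    ∑ k ∈ Finset.range (n + 1), PowerSeries.coeff n (f ^ k) / (Nat.factorial k : ℚ)


/-! Since `formalExp f = (exp ℚ).subst f`, the chain rule gives `(formalExp f)' = f' · formalExp f`.
By uniqueness of solutions of `F' = a F` with given constant term, `formalExp` therefore turns sums
into products and inverts `logOf`, so each factor `(1 ± X^N)^θ` is `formalExp (θ • logOf (1 ± X^N))`
and the product is `formalExp` of `Σ_N θ₊(N) log (1 + X^N) + θ₋(N) log (1 - X^N)`. For `N ∣ j` and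
`g = j/N`, the coefficient of `X^j` in `log (1 + X^N)` is `(-1)^(g+1)/g` and in `log (1 - X^N)` it
is `-1/g`; summed over the divisors of `j` this is `(K₊(j) - K₋(j))/j`, the sign `(-1)^(g+1)`
separating odd from even `g`. -/

namespace PowerSeries

theorem eq_of_derivative_eq_mul {R : Type*} [CommRing R] [IsAddTorsionFree R] {a F G : R⟦X⟧}
    (hF : d⁄dX R F = a * F) (hG : d⁄dX R G = a * G) (h0 : constantCoeff F = constantCoeff G) :
    F = G := by
  ext n
  induction n using Nat.strong_induction_on with
  | _ n ih =>
    rcases n with _ | n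
    · simpa using h0
    · have hlow : coeff n (a * F) = coeff n (a * G) := by
        simp only [coeff_mul]
        refine sum_congr rfl fun p hp => ?_
        rw [ih p.2 (Nat.lt_succ_of_le (Finset.HasAntidiagonal.antidiagonal.snd_le hp))]
      have h : (n + 1) • coeff (n + 1) F = (n + 1) • coeff (n + 1) G := by
        simpa only [← hF, ← hG, coeff_derivative, nsmul_eq_mul, Nat.cast_succ, mul_comm]
          using hlow
      exact (smul_right_inj n.succ_ne_zero).mp h

theorem coeff_pow_eq_zero_of_lt {R : Type*} [CommSemiring R] {f : R⟦X⟧}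
    (hf : constantCoeff f = 0) {m k : ℕ} (h : m < k) : coeff m (f ^ k) = 0 :=
  coeff_of_lt_order m ((Nat.cast_lt.mpr h).trans_le (le_order_pow_of_constantCoeff_eq_zero k hf))

theorem derivative_log_mul_one_add_X {A : Type*} [CommRing A] [Algebra ℚ A] :
    d⁄dX A (log A) * (1 + X) = 1 := by
  have hlog : d⁄dX A (log A) = rescale (-1) (mk 1) := by
    ext n
    simp [deriv_log]
  have hX : (1 + X : A⟦X⟧) = rescale (-1) (1 - X) := by
    simp [rescale_X, sub_eq_add_neg]
  rw [hlog, hX, ← map_mul, mk_one_mul_one_sub_eq_one, map_one]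

theorem coeff_subst_C_mul_X_pow {R : Type*} [CommRing R] (c : R) {N : ℕ} (hN : N ≠ 0)
    (f : R⟦X⟧) (n : ℕ) :
    coeff n (f.subst (C c * X ^ N)) = if N ∣ n then c ^ (n / N) * coeff (n / N) f else 0 := by
  have hc : (C c * X ^ N : R⟦X⟧) = (c • X : R⟦X⟧).subst (X ^ N) := by
    rw [subst_smul (HasSubst.X_pow hN), subst_X (HasSubst.X_pow hN), smul_eq_C_mul]
  rw [hc, ← subst_comp_subst_apply (HasSubst.smul_X' c) (HasSubst.X_pow hN), ← rescale_eq_subst,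
    coeff_subst_X_pow hN, coeff_rescale]
  rfl

end PowerSeries

theorem sum_Icc_ite_dvd {M : Type*} [AddCommMonoid M] {n j : ℕ} (hj : j ≠ 0) (hjn : j ≤ n)
    (a : ℕ → M) : ∑ N ∈ Icc 1 n, (if N ∣ j then a N else 0) = ∑ N ∈ j.divisors, a N := by
  rw [← sum_filter]
  congr 1
  ext N
  simp only [mem_filter, mem_Icc, Nat.mem_divisors, and_iff_left hj]
  constructor
  · exact fun h => h.2
  · intro hdvd
    exact ⟨⟨Nat.pos_of_dvd_of_pos hdvd (Nat.pos_of_ne_zero hj), (Nat.le_of_dvd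
      (Nat.pos_of_ne_zero hj) hdvd).trans hjn⟩, hdvd⟩

theorem sum_filter_odd_sub_sum_filter_even {R : Type*} [CommRing R] (s : Finset ℕ)
    (a : ℕ → R) :
    ∑ g ∈ s.filter Odd, a g - ∑ g ∈ s.filter Even, a g = ∑ g ∈ s, (-1) ^ (g + 1) * a g := by
  rw [← sum_filter_add_sum_filter_not s Odd]
  simp only [Nat.not_odd_iff_even]
  rw [sub_eq_add_neg, ← sum_neg_distrib]
  congr 1 <;> refine sum_congr rfl fun g hg => ?_ <;> obtain ⟨-, hg⟩ := mem_filter.mp hg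
  · rw [hg.add_one.neg_one_pow, one_mul]
  · rw [hg.add_one.neg_one_pow, neg_one_mul]

theorem formalExp_eq_subst_exp {f : ℚ⟦X⟧} (hf : constantCoeff f = 0) :
    formalExp f = (exp ℚ).subst f := by
  ext n
  rw [coeff_subst' (HasSubst.of_constantCoeff_zero' hf), finsum_eq_sum_of_support_subset
    (s := range (n + 1))]
  · simp [formalExp, div_eq_inv_mul]
  · intro k hk
    simp only [Function.mem_support, coe_range, Set.mem_Iio] at hk ⊢
    by_contra hkn
    exact hk (by rw [coeff_pow_eq_zero_of_lt hf (by omega), smul_zero])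

theorem constantCoeff_formalExp (f : ℚ⟦X⟧) : constantCoeff (formalExp f) = 1 := by
  rw [← coeff_zero_eq_constantCoeff_apply]
  simp [formalExp]

theorem derivative_formalExp {f : ℚ⟦X⟧} (hf : constantCoeff f = 0) :
    d⁄dX ℚ (formalExp f) = d⁄dX ℚ f * formalExp f := by
  rw [formalExp_eq_subst_exp hf, derivative_subst (HasSubst.of_constantCoeff_zero' hf),
    derivative_exp, mul_comm]

theorem formalExp_zero : formalExp 0 = 1 :=
  eq_of_derivative_eq_mul (a := 0) (by rw [derivative_formalExp (map_zero _)]; simp) (by simp)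
    (by simp [constantCoeff_formalExp])

theorem formalExp_add {f g : ℚ⟦X⟧} (hf : constantCoeff f = 0) (hg : constantCoeff g = 0) :
    formalExp (f + g) = formalExp f * formalExp g := by
  refine eq_of_derivative_eq_mul (a := d⁄dX ℚ (f + g)) ?_ ?_ ?_
  · exact derivative_formalExp (by simp [hf, hg])
  · rw [Derivation.leibniz, derivative_formalExp hf, derivative_formalExp hg, map_add,
      smul_eq_mul, smul_eq_mul]
    ring
  · simp [constantCoeff_formalExp]

theorem formalExp_nsmul {f : ℚ⟦X⟧} (hf : constantCoeff f = 0) (m : ℕ) :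
    formalExp (m • f) = formalExp f ^ m := by
  induction m with
  | zero => rw [zero_smul, formalExp_zero, pow_zero]
  | succ m ih => rw [succ_nsmul, formalExp_add (by simp [hf]) hf, ih, pow_succ]

theorem ringInverse_formalExp {f : ℚ⟦X⟧} (hf : constantCoeff f = 0) :
    Ring.inverse (formalExp f) = formalExp (-f) := by
  have hunit : IsUnit (formalExp f) :=
    isUnit_iff_constantCoeff.mpr (by simp [constantCoeff_formalExp])
  rw [← mul_one (Ring.inverse _), Ring.inverse_mul_eq_iff_eq_mul _ _ _ hunit,
    ← formalExp_add hf (by simp [hf]), add_neg_cancel, formalExp_zero]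

theorem fzpow_formalExp {f : ℚ⟦X⟧} (hf : constantCoeff f = 0) (k : ℤ) :
    fzpow (formalExp f) k = formalExp (k • f) := by
  unfold fzpow
  split_ifs with hk
  · rw [← formalExp_nsmul hf, ← natCast_zsmul, Int.toNat_of_nonneg hk]
  · rw [← formalExp_nsmul hf, ringInverse_formalExp (by simp [hf]), ← natCast_zsmul,
      Int.toNat_of_nonneg (by omega), ← neg_zsmul, neg_neg]

theorem formalExp_sum {ι : Type*} (s : Finset ι) {f : ι → ℚ⟦X⟧}
    (hf : ∀ i ∈ s, constantCoeff (f i) = 0) :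
    formalExp (∑ i ∈ s, f i) = ∏ i ∈ s, formalExp (f i) := by
  induction s using Finset.cons_induction with
  | empty => rw [sum_empty, prod_empty, formalExp_zero]
  | cons i s hi ih =>
    rw [forall_mem_cons] at hf
    rw [sum_cons, prod_cons, formalExp_add hf.1 (by rw [map_sum]; exact sum_eq_zero hf.2),
      ih hf.2]

theorem formalExp_log : formalExp (log ℚ) = 1 + X :=
  eq_of_derivative_eq_mul (derivative_formalExp constantCoeff_log)
    (by rw [derivative_log_mul_one_add_X]; simp) (by simp [constantCoeff_formalExp])

theorem formalExp_logOf {f : ℚ⟦X⟧} (hf : constantCoeff f = 1) : formalExp (logOf f) = f := by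
  have hsub : HasSubst (f - 1) := HasSubst.of_constantCoeff_zero' (by simp [hf])
  rw [formalExp_eq_subst_exp (constantCoeff_logOf hf), logOf_eq,
    ← subst_comp_subst_apply HasSubst.log hsub, ← formalExp_eq_subst_exp constantCoeff_log,
    formalExp_log, ← coe_substAlgHom hsub, map_add, map_one, coe_substAlgHom, subst_X hsub]
  ring

theorem constantCoeff_zsmul_logOf {u : ℚ⟦X⟧} (hu : constantCoeff u = 1) (k : ℤ) :
    constantCoeff (k • logOf u) = 0 := by
  rw [map_zsmul, constantCoeff_logOf hu, smul_zero]

theorem fzpow_eq_formalExp_zsmul_logOf {u : ℚ⟦X⟧} (hu : constantCoeff u = 1) (k : ℤ) :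
    fzpow u k = formalExp (k • logOf u) := by
  rw [← fzpow_formalExp (constantCoeff_logOf hu), formalExp_logOf hu]

theorem coeff_formalExp_congr {f g : ℚ⟦X⟧} {n : ℕ}
    (h : ∀ j ≤ n, coeff j f = coeff j g) : coeff n (formalExp f) = coeff n (formalExp g) := by
  have htrunc : trunc (n + 1) f = trunc (n + 1) g := by
    ext j
    simp only [coeff_trunc]
    split_ifs with hj
    exacts [h j (by omega), rfl]
  simp only [formalExp, coeff_mk]
  refine sum_congr rfl fun k _ => ?_
  have hk : trunc (n + 1) (f ^ k) = trunc (n + 1) (g ^ k) := by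
    rw [← trunc_trunc_pow, htrunc, trunc_trunc_pow]
  have := congrArg (Polynomial.coeff · n) hk
  simp only [coeff_trunc, Nat.lt_succ_self, if_true] at this
  rw [this]

theorem coeff_logOf_one_add_C_mul_X_pow (c : ℚ) {N j : ℕ} (hN : N ≠ 0) (hj : j ≠ 0) :
    coeff j (logOf (1 + C c * X ^ N)) =
      if N ∣ j then c ^ (j / N) * ((-1) ^ (j / N + 1) / (j / N : ℕ)) else 0 := by
  rw [logOf_eq, add_sub_cancel_left, coeff_subst_C_mul_X_pow c hN]
  split_ifs with hdvd
  · rw [coeff_log, if_neg (Nat.div_ne_zero_iff_of_dvd hdvd |>.mpr ⟨hj, hN⟩)]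
    rfl
  · rfl

theorem coeff_sum_zsmul_logOf (θp θm : ℕ → ℤ) {n j : ℕ} (hj : j ≠ 0) (hjn : j ≤ n) :
    coeff j (∑ N ∈ Icc 1 n,
      (θp N • logOf (1 + X ^ N : ℚ⟦X⟧) + θm N • logOf (1 - X ^ N : ℚ⟦X⟧))) =
      (∑ g ∈ j.divisors, (-1) ^ (g + 1) * (((j / g : ℕ) : ℚ) * (θp (j / g) : ℚ))
        - ∑ g ∈ j.divisors, ((j / g : ℕ) : ℚ) * (θm (j / g) : ℚ)) / j := by
  have hterm : ∀ N ∈ Icc 1 n,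
      coeff j (θp N • logOf (1 + X ^ N : ℚ⟦X⟧) + θm N • logOf (1 - X ^ N : ℚ⟦X⟧)) =
        if N ∣ j then ((θp N : ℚ) * (-1) ^ (j / N + 1) - θm N) / (j / N : ℕ) else 0 := by
    intro N hN
    have hN0 : N ≠ 0 := by have := (mem_Icc.mp hN).1; omega
    rw [show (1 + X ^ N : ℚ⟦X⟧) = 1 + C 1 * X ^ N by simp,
      show (1 - X ^ N : ℚ⟦X⟧) = 1 + C (-1) * X ^ N by simp [sub_eq_add_neg], map_add,
      map_zsmul, map_zsmul, coeff_logOf_one_add_C_mul_X_pow _ hN0 hj,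
      coeff_logOf_one_add_C_mul_X_pow _ hN0 hj]
    split_ifs
    · have hsign : (-1 : ℚ) ^ (j / N) * (-1) ^ (j / N + 1) = -1 := by
        rw [← pow_add]
        exact Odd.neg_one_pow ⟨j / N, by ring⟩
      simp only [zsmul_eq_mul, one_pow, one_mul, ← mul_div_assoc, hsign]
      ring
    · simp
  rw [map_sum, sum_congr rfl hterm, sum_Icc_ite_dvd hj hjn, ← Nat.sum_div_divisors, sub_div,
    sum_div, sum_div, ← sum_sub_distrib]
  refine sum_congr rfl fun g hg => ?_
  obtain ⟨hgj, -⟩ := Nat.mem_divisors.mp hg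
  have hg0 : (g : ℚ) ≠ 0 := Nat.cast_ne_zero.mpr (ne_zero_of_dvd_ne_zero hj hgj)
  rw [Nat.div_div_self hgj hj, Nat.cast_div hgj hg0]
  field_simp

/-- main computation in the proof of Theorem 3.1: the Feynman-identity
product `∏ (1+z^N)^{θ₊(N)} (1−z^N)^{θ₋(N)}` equals `exp(Σ (K₊(N)−K₋(N))/N · z^N)`
coefficientwise. -/
theorem feynman_product_eq_exp (θp θm Kp Km : ℕ → ℤ)
    (hKp : ∀ N : ℕ, 1 ≤ N →
      Kp N = ∑ g ∈ N.divisors.filter (fun g => Odd g), ((N / g : ℕ) : ℤ) * θp (N / g))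
    (hKm : ∀ N : ℕ, 1 ≤ N →
      Km N = ∑ g ∈ N.divisors.filter (fun g => Even g), ((N / g : ℕ) : ℤ) * θp (N / g)
        + ∑ g ∈ N.divisors, ((N / g : ℕ) : ℤ) * θm (N / g)) :
    ∀ n : ℕ,
      PowerSeries.coeff n (∏ N ∈ Finset.Icc 1 n,
          fzpow (1 + PowerSeries.X ^ N) (θp N) * fzpow (1 - PowerSeries.X ^ N) (θm N))
      = PowerSeries.coeff n (formalExp (PowerSeries.mk fun N =>
          if N = 0 then 0 else ((Kp N - Km N : ℤ) : ℚ) / (N : ℚ))) := by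
  intro n
  have hunit : ∀ N ∈ Icc 1 n, constantCoeff (1 + X ^ N : ℚ⟦X⟧) = 1 ∧
      constantCoeff (1 - X ^ N : ℚ⟦X⟧) = 1 := fun N hN => by
    simp [zero_pow (by have := (mem_Icc.mp hN).1; omega : N ≠ 0)]
  have hlog : ∀ N ∈ Icc 1 n, constantCoeff
      (θp N • logOf (1 + X ^ N : ℚ⟦X⟧) + θm N • logOf (1 - X ^ N : ℚ⟦X⟧)) = 0 := fun N hN => by
    rw [map_add, constantCoeff_zsmul_logOf (hunit N hN).1, constantCoeff_zsmul_logOf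
      (hunit N hN).2, add_zero]
  have hfactor : ∀ N ∈ Icc 1 n, fzpow (1 + X ^ N) (θp N) * fzpow (1 - X ^ N) (θm N) =
      formalExp (θp N • logOf (1 + X ^ N : ℚ⟦X⟧) + θm N • logOf (1 - X ^ N : ℚ⟦X⟧)) :=
    fun N hN => by
      obtain ⟨hplus, hminus⟩ := hunit N hN
      rw [fzpow_eq_formalExp_zsmul_logOf hplus, fzpow_eq_formalExp_zsmul_logOf hminus,
        formalExp_add (constantCoeff_zsmul_logOf hplus _) (constantCoeff_zsmul_logOf hminus _)]
  rw [prod_congr rfl hfactor, ← formalExp_sum _ hlog]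
  refine coeff_formalExp_congr fun j hjn => ?_
  rcases Nat.eq_zero_or_pos j with rfl | hj
  · rw [coeff_zero_eq_constantCoeff_apply, map_sum, sum_eq_zero hlog]
    simp
  · rw [coeff_sum_zsmul_logOf θp θm hj.ne' hjn, coeff_mk, if_neg hj.ne', hKp j hj, hKm j hj,
      ← sum_filter_odd_sub_sum_filter_even]
    simp only [Int.cast_sub, Int.cast_add, Int.cast_sum, Int.cast_mul, Int.cast_natCast]
    ring
end

section
/- Let ω : ℕ → ℚ be a sequence and define c : ℕ → ℚ by the expansion exp( − Σ_{k≥1} ω(k)/k · X^k ) = 1 − Σ_{i≥1} c(i)·X^i in ℚ⟦X⟧. Then for every N ≥ 1, ω(N) = N · Σ_{s} ((|s| − 1)! / s!) · ∏_{i≥1} c(i)^{s_i}, where the sum ranges over all finitely supported sequences s = (s_i)_{i≥1} of nonnegative integers with Σ_i i·s_i = N, and |s| = Σ_i s_i, s! = ∏_i s_i!. (Theorem 3.1, formula (3.6), the (+) case: recovery of ω(N) = Tr S^N from the coefficients c₊ via the logarithm expansion.) -/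
open Finset PowerSeries

theorem coeff_pow_of_lt {R : Type*} [CommRing R] {g : R⟦X⟧} (hg : constantCoeff g = 0)
    {j k : ℕ} (h : j < k) :
    coeff j (g ^ k) = 0 :=
  X_pow_dvd_iff.mp (pow_dvd_pow_of_dvd (X_dvd_iff.mpr hg) k) j h

noncomputable def expPartialSum (f : ℚ⟦X⟧) (M : ℕ) : ℚ⟦X⟧ :=
  ∑ k ∈ range (M + 1), (k.factorial : ℚ)⁻¹ • f ^ k

theorem coeff_formalExp_eq_coeff_expPartialSum {f : ℚ⟦X⟧} (hf : constantCoeff f = 0) {n M : ℕ}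
    (h : n ≤ M) : coeff n (formalExp f) = coeff n (expPartialSum f M) := by
  rw [formalExp, coeff_mk, expPartialSum, map_sum]
  refine (sum_congr rfl fun k _ => ?_).trans
    (sum_subset (range_subset_range.mpr (by omega)) fun k _ hk => ?_)
  · rw [coeff_smul, smul_eq_mul, div_eq_inv_mul]
  · rw [coeff_smul, coeff_pow_of_lt hf (by simpa using hk), smul_zero]

theorem derivative_expPartialSum_succ (f : ℚ⟦X⟧) (M : ℕ) :
    d⁄dX ℚ (expPartialSum f (M + 1)) = d⁄dX ℚ f * expPartialSum f M := by
  rw [expPartialSum, map_sum, sum_range_succ', pow_zero, Derivation.map_smul,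
    Derivation.map_one_eq_zero, smul_zero, add_zero, expPartialSum, mul_sum]
  refine sum_congr rfl fun k _ => ?_
  rw [Derivation.map_smul, Derivation.leibniz_pow, Nat.add_sub_cancel, ← Nat.cast_smul_eq_nsmul ℚ,
    smul_smul, smul_eq_mul, mul_smul_comm, Nat.factorial_succ]
  push_cast
  congr 1
  · field_simp
  · exact mul_comm _ _

section
variable {K : Type*} [Field K] [CharZero K]

theorem derivative_sum_pow_div (g : K⟦X⟧) (n : ℕ) :
    d⁄dX K (∑ m ∈ range n, (m + 1 : K)⁻¹ • g ^ (m + 1)) = d⁄dX K g * ∑ m ∈ range n, g ^ m := by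
  rw [map_sum, mul_sum]
  refine sum_congr rfl fun m _ => ?_
  rw [Derivation.map_smul, Derivation.leibniz_pow, Nat.add_sub_cancel, ← Nat.cast_smul_eq_nsmul K,
    smul_smul, smul_eq_mul, mul_comm]
  push_cast
  rw [mul_inv_cancel₀ (Nat.cast_add_one_ne_zero m), one_smul, mul_comm]

/-- Coefficientwise form of `f = log (1 - g) = -∑_{m ≥ 1} g ^ m / m`. -/
theorem coeff_eq_neg_sum_coeff_pow_div {f g : K⟦X⟧} (hg : constantCoeff g = 0)
    (h : d⁄dX K (1 - g) = d⁄dX K f * (1 - g)) (n : ℕ) :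
    coeff (n + 1) f = -∑ m ∈ range (n + 1), (m + 1 : K)⁻¹ * coeff (n + 1) (g ^ (m + 1)) := by
  set P := ∑ m ∈ range (n + 1), (m + 1 : K)⁻¹ • g ^ (m + 1)
  have hP : d⁄dX K f * (1 - g ^ (n + 1)) = -d⁄dX K P := by
    have hg' : d⁄dX K g = -(d⁄dX K f * (1 - g)) := by
      rw [← h, map_sub, derivative_one, zero_sub, neg_neg]
    rw [derivative_sum_pow_div, hg', ← mul_neg_geom_sum]
    ring
  have hco := congrArg (coeff n) hP
  rw [mul_sub, mul_one, map_sub, map_neg, coeff_derivative, coeff_derivative, coeff_mul] at hco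
  have hgN : ∀ p ∈ antidiagonal n, coeff p.1 (d⁄dX K f) * coeff p.2 (g ^ (n + 1)) = 0 :=
    fun p hp => by
      rw [coeff_pow_of_lt hg (by rw [HasAntidiagonal.mem_antidiagonal] at hp; omega), mul_zero]
  rw [sum_eq_zero hgN, sub_zero] at hco
  rw [mul_right_cancel₀ (Nat.cast_add_one_ne_zero n) (hco.trans (neg_mul _ _).symm), map_sum]
  simp_rw [coeff_smul, smul_eq_mul]

end

section
variable {R : Type*} [CommRing R]

theorem coeff_pow_eq_of_X_pow_dvd_sub {f g : R⟦X⟧} {n : ℕ} (h : X ^ (n + 1) ∣ f - g) (m : ℕ) :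
    coeff n (f ^ m) = coeff n (g ^ m) := by
  have := X_pow_dvd_iff.mp (h.trans (sub_dvd_pow_sub_pow f g m)) n n.lt_succ_self
  rwa [map_sub, sub_eq_zero] at this

theorem X_pow_succ_dvd_sub_sum_monomial {g : R⟦X⟧} (hg : constantCoeff g = 0) (N : ℕ) :
    X ^ (N + 1) ∣ g - ∑ i : Fin N, monomial ((i : ℕ) + 1) (coeff ((i : ℕ) + 1) g) := by
  refine X_pow_dvd_iff.mpr fun d hd => ?_
  rw [map_sub, map_sum, sub_eq_zero]
  simp only [coeff_monomial]
  rcases d with _ | j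
  · simp [hg]
  · have hj : j < N := by omega
    rw [sum_eq_single ⟨j, hj⟩
      (fun i _ hi => if_neg fun h => hi (Fin.ext (by simp at h ⊢; omega))) (by simp), if_pos rfl]

theorem coeff_sum_monomial_pow {ι : Type*} [DecidableEq ι] (s : Finset ι) (e : ι → ℕ)
    (a : ι → R) (n m : ℕ) :
    coeff n ((∑ i ∈ s, monomial (e i) (a i)) ^ m) =
      ∑ k ∈ (piAntidiag s m).filter (fun k => ∑ i ∈ s, e i * k i = n),
        (Nat.multinomial s k : R) * ∏ i ∈ s, a i ^ k i := by
  rw [sum_pow_eq_sum_piAntidiag, map_sum, sum_filter]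
  refine sum_congr rfl fun k _ => ?_
  simp_rw [monomial_pow, prod_monomial, ← map_natCast (C (R := R)), coeff_C_mul, coeff_monomial]
  split_ifs <;> simp_all [mul_comm]

theorem coeff_pow_eq_sum_multinomial {g : R⟦X⟧} (hg : constantCoeff g = 0) (N m : ℕ) :
    coeff N (g ^ m) =
      ∑ k ∈ (piAntidiag univ m).filter (fun k : Fin N → ℕ => ∑ i : Fin N, ((i : ℕ) + 1) * k i = N),
        (Nat.multinomial univ k : R) * ∏ i : Fin N, coeff ((i : ℕ) + 1) g ^ k i := by
  rw [coeff_pow_eq_of_X_pow_dvd_sub (X_pow_succ_dvd_sub_sum_monomial hg N), coeff_sum_monomial_pow]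

end

theorem sum_filter_finFun_eq_sum_filter_piFinset {ι β : Type*} [Fintype ι] [DecidableEq ι]
    [AddCommMonoid β] (M : ℕ) (P : (ι → ℕ) → Prop) [DecidablePred P] (F : (ι → ℕ) → β) :
    ∑ s ∈ univ.filter (fun s : ι → Fin (M + 1) => P fun i => s i), F (fun i => s i) =
      ∑ k ∈ (Fintype.piFinset fun _ => range (M + 1)).filter P, F k := by
  refine sum_bij' (fun s _ i => s i)
    (fun k hk i => ⟨k i, mem_range.mp (Fintype.mem_piFinset.mp (mem_filter.mp hk).1 i)⟩)
    (fun s hs => mem_filter.mpr ⟨Fintype.mem_piFinset.mpr fun i => mem_range.mpr (s i).isLt,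
      (mem_filter.mp hs).2⟩)
    (fun k hk => mem_filter.mpr ⟨mem_univ _, (mem_filter.mp hk).2⟩)
    (fun _ _ => rfl) (fun _ _ => rfl) (fun _ _ => rfl)

theorem sum_le_sum_succ_mul {N : ℕ} (k : Fin N → ℕ) :
    ∑ i, k i ≤ ∑ i : Fin N, ((i : ℕ) + 1) * k i :=
  sum_le_sum fun i _ => Nat.le_mul_of_pos_left _ i.val.succ_pos

theorem piAntidiag_succ_filter_eq_filter_piFinset {N m : ℕ} (hN : N ≠ 0) :
    (piAntidiag univ (m + 1)).filter (fun k : Fin N → ℕ => ∑ i : Fin N, ((i : ℕ) + 1) * k i = N) =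
      ((Fintype.piFinset fun _ => range (N + 1)).filter
        fun k : Fin N → ℕ => ∑ i : Fin N, ((i : ℕ) + 1) * k i = N).filter
        fun k => ∑ i, k i - 1 = m := by
  ext k
  simp only [mem_filter, mem_piAntidiag, Fintype.mem_piFinset, mem_range, mem_univ, implies_true,
    and_true]
  have hle := sum_le_sum_succ_mul k
  constructor
  · rintro ⟨hm, hw⟩
    refine ⟨⟨fun i => ?_, hw⟩, by simp only [hm]; omega⟩
    have := single_le_sum (fun i _ => Nat.zero_le (k i)) (mem_univ i)
    omega
  · rintro ⟨⟨-, hw⟩, hm⟩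
    refine ⟨?_, hw⟩
    have hpos : ∑ i, k i ≠ 0 := fun h0 => hN <| by
      rw [← hw]; exact sum_eq_zero fun i _ => by simp [(sum_eq_zero_iff.mp h0) i (mem_univ i)]
    change ∑ i, k i = m + 1
    omega

theorem sum_factorial_div_eq_sum_multinomial {K : Type*} [Field K] [CharZero K] {N : ℕ}
    (hN : N ≠ 0) (a : Fin N → K) :
    ∑ k ∈ (Fintype.piFinset fun _ => range (N + 1)).filter
        (fun k : Fin N → ℕ => ∑ i : Fin N, ((i : ℕ) + 1) * k i = N),
      ((∑ i, k i - 1).factorial : K) / (∏ i, ((k i).factorial : K)) * ∏ i, a i ^ k i =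
    ∑ m ∈ range N, (m + 1 : K)⁻¹ *
      ∑ k ∈ (piAntidiag univ (m + 1)).filter
          (fun k : Fin N → ℕ => ∑ i : Fin N, ((i : ℕ) + 1) * k i = N),
        (Nat.multinomial univ k : K) * ∏ i, a i ^ k i := by
  rw [← sum_fiberwise_of_maps_to (g := fun k => ∑ i, k i - 1) (t := range N) fun k hk => by
    have := sum_le_sum_succ_mul k
    simp only [mem_filter] at hk
    simp only [mem_range]
    omega]
  refine sum_congr rfl fun m _ => ?_
  rw [← piAntidiag_succ_filter_eq_filter_piFinset hN, mul_sum]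
  refine sum_congr rfl fun k hk => ?_
  have hm : ∑ i, k i = m + 1 := (mem_piAntidiag.mp (mem_filter.mp hk).1).1
  have hspec := Nat.multinomial_spec univ k
  rw [hm, Nat.factorial_succ] at hspec
  have hprod : (∏ i, ((k i).factorial : K)) ≠ 0 :=
    prod_ne_zero_iff.mpr fun i _ => Nat.cast_ne_zero.mpr (Nat.factorial_ne_zero _)
  have hspecK : (∏ i, ((k i).factorial : K)) * Nat.multinomial univ k = (m + 1) * m.factorial := by
    exact_mod_cast hspec
  rw [hm, Nat.add_sub_cancel]
  field_simp
  linear_combination -(∏ i, a i ^ k i) * hspecK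

/-- Theorem 3.1, formula (3.6), the `+` case: recovery of
`ω(N)` from the coefficients `c(i)` of `exp(−Σ ω(k)/k X^k) = 1 − Σ c(i) X^i`.
A finitely supported sequence `s = (s_i)_{i≥1}` with `Σ i·s_i = N` is encoded as
`s : Fin N → Fin (N+1)`, with `s ⟨i-1⟩` playing the role of `s_i`
(note `s_i = 0` for `i > N` and `s_i ≤ N` automatically). -/
theorem trace_from_coefficients (ω c : ℕ → ℚ)
    (hc : ∀ i : ℕ, 1 ≤ i → c i = - PowerSeries.coeff i
      (formalExp (- PowerSeries.mk fun k => if k = 0 then 0 else ω k / (k : ℚ)))) :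
    ∀ N : ℕ, 1 ≤ N →
      ω N = (N : ℚ) *
        ∑ s ∈ Finset.univ.filter (fun s : Fin N → Fin (N + 1) =>
            (∑ i : Fin N, ((i : ℕ) + 1) * (s i : ℕ)) = N),
          (((∑ i : Fin N, (s i : ℕ)) - 1).factorial : ℚ) /
              (∏ i : Fin N, ((s i : ℕ).factorial : ℚ)) *
            ∏ i : Fin N, c ((i : ℕ) + 1) ^ ((s i : ℕ)) := by
  intro N hN
  set f : ℚ⟦X⟧ := -mk fun k => if k = 0 then 0 else ω k / k with hf
  set g := 1 - formalExp f
  have hf0 : constantCoeff f = 0 := by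
    rw [hf, map_neg, ← coeff_zero_eq_constantCoeff_apply, coeff_mk, if_pos rfl, neg_zero]
  have hg0 : constantCoeff g = 0 := by simp [g, constantCoeff_formalExp]
  have hgc (i : Fin N) : coeff ((i : ℕ) + 1) g = c ((i : ℕ) + 1) := by
    simp [g, hc _ (Nat.le_add_left 1 i)]
  have hlog : d⁄dX ℚ (1 - g) = d⁄dX ℚ f * (1 - g) := by
    simpa [g] using derivative_formalExp hf0
  have hsum := sum_filter_finFun_eq_sum_filter_piFinset N
    (fun k => ∑ i : Fin N, ((i : ℕ) + 1) * k i = N)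
    (fun k => ((∑ i, k i - 1).factorial : ℚ) / (∏ i, ((k i).factorial : ℚ)) *
      ∏ i : Fin N, c ((i : ℕ) + 1) ^ k i)
  beta_reduce at hsum
  rw [hsum, sum_factorial_div_eq_sum_multinomial (by omega)]
  obtain ⟨n, rfl⟩ := Nat.exists_eq_add_of_le' hN
  have hω : ω (n + 1) = -(n + 1) * coeff (n + 1) f := by
    rw [hf, map_neg, coeff_mk, if_neg n.succ_ne_zero]
    push_cast
    field_simp
  simp_rw [hω, coeff_eq_neg_sum_coeff_pow_div hg0 hlog n, coeff_pow_eq_sum_multinomial hg0, hgc]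
  push_cast
  ring
end

section
/- Let a, c : ℕ → ℚ be sequences such that (1 + Σ_{n≥1} a(n)·X^n)² = 1 − Σ_{n≥1} c(n)·X^n in ℚ⟦X⟧. Then for every n ≥ 1, 2n·a(n) = −n·c(n) + Σ_{k=1}^{n−1} (3k − n)·a(k)·c(n−k). (Theorem 3.3, formula (3.13): the recursion relating the coefficients a(n) of the Euler polynomial E_G(z) = 1 + Σ a(n)z^n to the coefficients c₊(n) defined by E_G²(z) = 1 − Σ c₊(n)z^n.) -/
/-!
Differentiating `E ^ 2 = F` gives `F' = 2 E E'`, so `E F' = 2 E ^ 2 E' = 2 F E'`. Multiplying by `X`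
turns the derivative into the Euler operator `∑ fₙ Xⁿ ↦ ∑ n fₙ Xⁿ`, and comparing `n`-th
coefficients yields `∑_{i + j = n} (2 i - j) eᵢ f_j = 0`. For `E = 1 + ∑ a(n) Xⁿ` and
`F = 1 - ∑ c(n) Xⁿ` the terms `(i, j) = (n, 0)` and `(0, n)` contribute `2 n a(n)` and `n c(n)`,
and the interior terms are `-(3 k - n) a(k) c(n - k)`.
-/

open Finset PowerSeries

namespace PowerSeries

variable {R : Type*}

theorem coeff_X_mul_derivative [CommSemiring R] (f : R⟦X⟧) (n : ℕ) :
    coeff n (X * d⁄dX R f) = n * coeff n f := by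
  cases n with
  | zero => simp
  | succ n => rw [coeff_succ_X_mul, coeff_derivative, mul_comm]; push_cast; rfl

theorem two_mul_derivative_mul_eq_of_sq_eq [CommSemiring R] {E F : R⟦X⟧} (h : E ^ 2 = F) :
    2 * d⁄dX R E * F = E * d⁄dX R F := by
  subst h
  rw [derivative_pow]
  push_cast
  ring

theorem sum_antidiagonal_mul_coeff_eq_zero_of_sq_eq [CommRing R] {E F : R⟦X⟧} (h : E ^ 2 = F)
    (n : ℕ) :
    ∑ p ∈ antidiagonal n, (2 * p.1 - p.2 : R) * (coeff p.1 E * coeff p.2 F) = 0 := by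
  have key : C 2 * ((X * d⁄dX R E) * F) - E * (X * d⁄dX R F) = 0 := by
    rw [map_ofNat]
    linear_combination (X : R⟦X⟧) * two_mul_derivative_mul_eq_of_sq_eq h
  have hcoeff := congrArg (coeff n) key
  rw [map_sub, coeff_C_mul, coeff_mul, coeff_mul, mul_sum, ← sum_sub_distrib, map_zero] at hcoeff
  rw [← hcoeff]
  refine sum_congr rfl fun p _ => ?_
  rw [coeff_X_mul_derivative, coeff_X_mul_derivative]
  ring

end PowerSeries

theorem Finset.Nat.sum_antidiagonal_eq_add_sum_Icc {M : Type*} [AddCommMonoid M]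
    (f : ℕ → ℕ → M) {n : ℕ} (hn : 1 ≤ n) :
    ∑ p ∈ antidiagonal n, f p.1 p.2 = f 0 n + f n 0 + ∑ k ∈ Icc 1 (n - 1), f k (n - k) := by
  rw [Nat.sum_antidiagonal_eq_sum_range_succ, sum_range_succ, sum_range_eq_add_Ico _ hn,
    Icc_sub_one_right_eq_Ico_of_not_isMin (by simpa using Nat.one_le_iff_ne_zero.mp hn)]
  simp only [Nat.sub_zero, Nat.sub_self]
  abel

/-- Theorem 3.3, formula (3.13): the recursion relating the
coefficients `a(n)` of the Euler polynomial `E_G(z) = 1 + Σ a(n) z^n` to the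
coefficients `c(n)` defined by `E_G²(z) = 1 − Σ c(n) z^n`. -/
theorem euler_coefficients_recursion (a c : ℕ → ℚ)
    (h : ((1 : PowerSeries ℚ) + PowerSeries.mk fun n => if n = 0 then 0 else a n) ^ 2 =
        (1 : PowerSeries ℚ) - PowerSeries.mk fun n => if n = 0 then 0 else c n) :
    ∀ n : ℕ, 1 ≤ n →
      2 * (n : ℚ) * a n =
        -(n : ℚ) * c n + ∑ k ∈ Finset.Icc 1 (n - 1), (3 * (k : ℚ) - n) * a k * c (n - k) := by
  intro n hn
  set E : ℚ⟦X⟧ := 1 + mk fun n => if n = 0 then 0 else a n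
  set F : ℚ⟦X⟧ := 1 - mk fun n => if n = 0 then 0 else c n
  have coeff_E : ∀ k ≠ 0, coeff k E = a k := fun k hk => by simp [E, coeff_one, hk]
  have coeff_F : ∀ k ≠ 0, coeff k F = -c k := fun k hk => by simp [F, coeff_one, hk]
  have coeff_E_zero : coeff 0 E = 1 := by simp [E]
  have coeff_F_zero : coeff 0 F = 1 := by simp [F]
  have hsum := sum_antidiagonal_mul_coeff_eq_zero_of_sq_eq h n
  rw [Nat.sum_antidiagonal_eq_add_sum_Icc (fun i j => (2 * i - j : ℚ) * (coeff i E * coeff j F)) hn]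
    at hsum
  have interior : ∀ k ∈ Icc 1 (n - 1),
      (2 * k - (n - k : ℕ) : ℚ) * (coeff k E * coeff (n - k) F) =
        -((3 * k - n) * a k * c (n - k)) := by
    intro k hk
    obtain ⟨hk1, hkn⟩ := mem_Icc.mp hk
    rw [coeff_E k (by omega), coeff_F (n - k) (by omega), Nat.cast_sub (by omega)]
    ring
  rw [sum_congr rfl interior, sum_neg_distrib, coeff_E n (by omega), coeff_F n (by omega),
    coeff_E_zero, coeff_F_zero] at hsum
  linear_combination hsum
end
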